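/- Let S be a partially ordered set with a simply connected extension (∼_u, ∼_l). Then for all a, b, c ∈ S, c ∈ B_{a,b} if and only if B_{a,b} = B_{a,c} ∪ B_{c,b}. -/

import Mathlib

/-!
Exchanging `a` and `b` preserves `B_{a,b}`, and reversing the order while exchanging `∼ᵤ` with
`∼ₗ` preserves every between set, so for `c ∈ B_{a,b}` distinct from `a` and `b` only three
configurations remain: `a < c < b`; `a < b` with `a ∼ᵤ c ∼ₗ b`; and `a ∼ₗ b` with `a ∼ₗ c < b`.
In each, the two sides are compared pointwise by a case split on how `x` relates to `a`, `b`
or `c`; acyclicity, transitivity, and the fact that a `∼ₗ`-pair has no common upper bound (a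
`∼ᵤ`-pair no common lower bound) discard every case in which `x` lies on one side only.
-/

open Pointwise

namespace PaperSC

variable {S : Type*}

/-- Exactly one of four propositions holds. -/
def ExactlyOne4 (p q r s : Prop) : Prop :=
  (p ∨ q ∨ r ∨ s) ∧ (p → ¬q ∧ ¬r ∧ ¬s) ∧ (q → ¬r ∧ ¬s) ∧ (r → ¬s)

/-- `x` and `y` are incomparable with respect to the strict order `lt`. -/
def Incomp (lt : S → S → Prop) (x y : S) : Prop :=
  x ≠ y ∧ ¬ lt x y ∧ ¬ lt y x

/-- The reflexive closure of `lt`. -/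
def Le' (lt : S → S → Prop) (x y : S) : Prop := x = y ∨ lt x y

/-- `x ∼ᵤ y` : `x` and `y` are incomparable and have a common upper bound. -/
def SimU (lt : S → S → Prop) (x y : S) : Prop :=
  Incomp lt x y ∧ ∃ z, Le' lt x z ∧ Le' lt y z

/-- `x ∼ₗ y` : `x` and `y` are incomparable and have a common lower bound. -/
def SimL (lt : S → S → Prop) (x y : S) : Prop :=
  Incomp lt x y ∧ ∃ z, Le' lt z x ∧ Le' lt z y

/-- Every incomparable pair has a common upper bound or a common lower bound. -/
def StronglyConnectedRel (lt : S → S → Prop) : Prop :=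
  ∀ x y, Incomp lt x y → SimU lt x y ∨ SimL lt x y

/-- Acyclicity: `x ∼ᵤ y` and `x ∼ₗ z` imply `y < z`. -/
def AcyclicRel (lt : S → S → Prop) : Prop :=
  ∀ x y z, SimU lt x y → SimL lt x z → lt y z

/-- `(u, l)` is a simply connected extension of the strict partial order `lt`. -/
structure IsSCExt (lt u l : S → S → Prop) : Prop where
  u_symm : ∀ x y, u x y → u y x
  l_symm : ∀ x y, l x y → l y x
  exactly_one : ∀ x y, x ≠ y → ExactlyOne4 (lt x y) (lt y x) (u x y) (l x y)
  u_of_ub : ∀ x y, Incomp lt x y → (∃ z, Le' lt x z ∧ Le' lt y z) → u x y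
  l_of_lb : ∀ x y, Incomp lt x y → (∃ z, Le' lt z x ∧ Le' lt z y) → l x y
  acyclic : ∀ x y z, u x y → l x z → lt y z

/-- `b` is between `a` and `c` (with respect to `lt` and the extension `(u, l)`). -/
def Btwn (lt u l : S → S → Prop) (a c b : S) : Prop :=
  (lt a c ∧ ((lt a b ∧ lt b c) ∨ (u a b ∧ l b c))) ∨
  (lt c a ∧ ((lt c b ∧ lt b a) ∨ (u c b ∧ l b a))) ∨
  (l a c ∧ ((l a b ∧ lt b c) ∨ (l c b ∧ lt b a))) ∨
  (u a c ∧ ((u a b ∧ lt c b) ∨ (u c b ∧ lt a b)))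

/-- The between set `B_{a,b}`; it equals `{a}` when `a = b`. -/
def BSet (lt u l : S → S → Prop) (a b : S) : Set S :=
  {a, b} ∪ {x | a ≠ b ∧ Btwn lt u l a b x}

/-- The set `A` is totally ordered by `lt`. -/
def IsChainRel (lt : S → S → Prop) (A : Set S) : Prop :=
  ∀ p ∈ A, ∀ q ∈ A, p = q ∨ lt p q ∨ lt q p

/-- `x O y` iff `B_{x,y}` is totally ordered by `lt`. -/
def ORel (lt u l : S → S → Prop) (x y : S) : Prop :=
  IsChainRel lt (BSet lt u l x y)

/-- The extension is rectifiable: every between set is a finite union of `O`-classes. -/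
def Rectifiable (lt u l : S → S → Prop) : Prop :=
  ∀ a b : S, a ≠ b → ∃ F : Finset S,
    (↑F : Set S) ⊆ BSet lt u l a b ∧
    ∀ x ∈ BSet lt u l a b, ∃ c ∈ F, ORel lt u l x c

section

variable {lt u l : S → S → Prop} {a b c x y z : S}

theorem bset_self (a : S) : BSet lt u l a a = {a} := by
  simp [BSet]

theorem left_mem_bset : a ∈ BSet lt u l a b := Or.inl (Or.inl rfl)

theorem right_mem_bset : b ∈ BSet lt u l a b := Or.inl (Or.inr rfl)

theorem bset_eq_bset_self_union : BSet lt u l a b = BSet lt u l a a ∪ BSet lt u l a b := by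
  rw [bset_self, Set.singleton_union, Set.insert_eq_of_mem left_mem_bset]

theorem bset_eq_union_bset_self : BSet lt u l a b = BSet lt u l a b ∪ BSet lt u l b b := by
  rw [bset_self, Set.union_singleton, Set.insert_eq_of_mem right_mem_bset]

namespace IsSCExt

theorem lt_or_gt_or_u_or_l (h : IsSCExt lt u l) (hne : x ≠ y) :
    lt x y ∨ lt y x ∨ u x y ∨ l x y :=
  (h.exactly_one x y hne).1

-- `IsSCExt` says nothing about `u x x` and `l x x`.
theorem not_l_of_u (h : IsSCExt lt u l) (hne : x ≠ y) (hu : u x y) : ¬ l x y := by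
  have := h.exactly_one x y hne
  unfold ExactlyOne4 at this
  tauto

theorem not_u_of_l (h : IsSCExt lt u l) (hne : x ≠ y) (hl : l x y) : ¬ u x y :=
  fun hu => h.not_l_of_u hne hu hl

theorem swap (h : IsSCExt lt u l) : IsSCExt (Function.swap lt) l u where
  u_symm := h.l_symm
  l_symm := h.u_symm
  exactly_one x y hne := by
    have := h.exactly_one x y hne
    unfold ExactlyOne4 at this ⊢
    unfold Function.swap
    tauto
  u_of_ub x y hxy := fun ⟨z, hx, hy⟩ =>
    h.l_of_lb x y ⟨hxy.1, hxy.2.2, hxy.2.1⟩ ⟨z, hx.imp Eq.symm id, hy.imp Eq.symm id⟩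
  l_of_lb x y hxy := fun ⟨z, hx, hy⟩ =>
    h.u_of_ub x y ⟨hxy.1, hxy.2.2, hxy.2.1⟩ ⟨z, hx.imp Eq.symm id, hy.imp Eq.symm id⟩
  acyclic x y z hu hl := h.acyclic x z y hl hu

theorem bset_swap (h : IsSCExt lt u l) : BSet (Function.swap lt) l u a b = BSet lt u l a b := by
  ext x
  simp only [BSet, Btwn, Function.swap, Set.mem_union, Set.mem_ofPred_eq]
  grind [h.u_symm, h.l_symm]

theorem bset_comm (h : IsSCExt lt u l) : BSet lt u l a b = BSet lt u l b a := by
  ext x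
  simp only [BSet, Btwn, Set.mem_union, Set.mem_ofPred_eq]
  grind [h.u_symm, h.l_symm]

theorem bset_eq_union_comm (h : IsSCExt lt u l) :
    BSet lt u l a b = BSet lt u l a c ∪ BSet lt u l c b ↔
      BSet lt u l b a = BSet lt u l b c ∪ BSet lt u l c a := by
  rw [h.bset_comm (a := a) (b := b), h.bset_comm (a := a) (b := c),
    h.bset_comm (a := c) (b := b), Set.union_comm]

variable [IsStrictOrder S lt]

theorem not_u_of_lt (h : IsSCExt lt u l) (hxy : lt x y) : ¬ u x y := by
  have := h.exactly_one x y (ne_of_irrefl hxy)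
  unfold ExactlyOne4 at this
  tauto

theorem not_l_of_lt (h : IsSCExt lt u l) (hxy : lt x y) : ¬ l x y := by
  have := h.exactly_one x y (ne_of_irrefl hxy)
  unfold ExactlyOne4 at this
  tauto

theorem not_l_of_lt_of_lt (h : IsSCExt lt u l) (hne : x ≠ y) (hx : lt x z) (hy : lt y z) :
    ¬ l x y := by
  intro hl
  refine h.not_l_of_u hne (h.u_of_ub x y ⟨hne, ?_, ?_⟩ ⟨z, .inr hx, .inr hy⟩) hl
  · exact fun hxy => h.not_l_of_lt hxy hl
  · exact fun hyx => h.not_l_of_lt hyx (h.l_symm _ _ hl)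

theorem not_u_of_lt_of_lt (h : IsSCExt lt u l) (hne : x ≠ y) (hx : lt z x) (hy : lt z y) :
    ¬ u x y := by
  intro hu
  refine h.not_l_of_u hne hu (h.l_of_lb x y ⟨hne, ?_, ?_⟩ ⟨z, .inr hx, .inr hy⟩)
  · exact fun hxy => h.not_u_of_lt hxy hu
  · exact fun hyx => h.not_u_of_lt hyx (h.u_symm _ _ hu)

theorem mem_bset_of_lt (h : IsSCExt lt u l) (hab : lt a b) :
    x ∈ BSet lt u l a b ↔ x = a ∨ x = b ∨ (lt a x ∧ lt x b) ∨ (u a x ∧ l x b) := by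
  simp [BSet, Btwn, hab, asymm hab, h.not_u_of_lt hab, h.not_l_of_lt hab, ne_of_irrefl hab,
    or_assoc]

theorem mem_bset_of_l (h : IsSCExt lt u l) (hne : a ≠ b) (hab : l a b) :
    x ∈ BSet lt u l a b ↔ x = a ∨ x = b ∨ (l a x ∧ lt x b) ∨ (l b x ∧ lt x a) := by
  have hab' : ¬ lt a b := fun h' => h.not_l_of_lt h' hab
  have hba' : ¬ lt b a := fun h' => h.not_l_of_lt h' (h.l_symm a b hab)
  simp [BSet, Btwn, hab, hne, hab', hba', h.not_u_of_l hne hab, or_assoc]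

theorem mem_bset_of_u (h : IsSCExt lt u l) (hne : a ≠ b) (hab : u a b) :
    x ∈ BSet lt u l a b ↔ x = a ∨ x = b ∨ (u a x ∧ lt b x) ∨ (u b x ∧ lt a x) := by
  have hab' : ¬ lt a b := fun h' => h.not_u_of_lt h' hab
  have hba' : ¬ lt b a := fun h' => h.not_u_of_lt h' (h.u_symm a b hab)
  simp [BSet, Btwn, hab, hne, hab', hba', h.not_l_of_u hne hab, or_assoc]

theorem bset_eq_union_of_lt_of_lt (h : IsSCExt lt u l) (hab : lt a b) (hac : lt a c)
    (hcb : lt c b) :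
    BSet lt u l a b = BSet lt u l a c ∪ BSet lt u l c b := by
  ext x
  simp only [Set.mem_union, h.mem_bset_of_lt hab, h.mem_bset_of_lt hac, h.mem_bset_of_lt hcb]
  grind [trans_of lt, irrefl_of lt, h.u_symm, h.l_symm, h.acyclic, h.lt_or_gt_or_u_or_l,
    h.not_l_of_lt, h.not_u_of_lt, h.not_u_of_lt_of_lt, h.not_l_of_lt_of_lt]

theorem bset_eq_union_of_u_of_l (h : IsSCExt lt u l) (hab : lt a b) (hac : u a c)
    (hcb : l c b) :
    BSet lt u l a b = BSet lt u l a c ∪ BSet lt u l c b := by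
  have hac' : a ≠ c := by rintro rfl; exact h.not_l_of_lt hab hcb
  have hcb' : c ≠ b := by rintro rfl; exact h.not_u_of_lt hab hac
  ext x
  simp only [Set.mem_union, h.mem_bset_of_lt hab, h.mem_bset_of_u hac' hac,
    h.mem_bset_of_l hcb' hcb]
  grind [trans_of lt, irrefl_of lt, h.u_symm, h.l_symm, h.acyclic, h.lt_or_gt_or_u_or_l,
    h.not_l_of_lt, h.not_u_of_lt, h.not_u_of_lt_of_lt, h.not_l_of_lt_of_lt]

theorem bset_eq_union_of_l_of_lt (h : IsSCExt lt u l) (hne : a ≠ b) (hab : l a b) (hac : l a c)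
    (hcb : lt c b) :
    BSet lt u l a b = BSet lt u l a c ∪ BSet lt u l c b := by
  have hac' : a ≠ c := by rintro rfl; exact h.not_l_of_lt hcb hab
  ext x
  simp only [Set.mem_union, h.mem_bset_of_l hne hab, h.mem_bset_of_l hac' hac,
    h.mem_bset_of_lt hcb]
  grind [trans_of lt, irrefl_of lt, h.u_symm, h.l_symm, h.acyclic, h.lt_or_gt_or_u_or_l,
    h.not_l_of_lt, h.not_u_of_lt, h.not_u_of_lt_of_lt, h.not_l_of_lt_of_lt]

theorem bset_eq_union_of_lt_of_mem (h : IsSCExt lt u l) (hab : lt a b)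
    (hc : c ∈ BSet lt u l a b) : BSet lt u l a b = BSet lt u l a c ∪ BSet lt u l c b := by
  rcases (h.mem_bset_of_lt hab).1 hc with rfl | rfl | ⟨hac, hcb⟩ | ⟨hac, hcb⟩
  · exact bset_eq_bset_self_union
  · exact bset_eq_union_bset_self
  · exact h.bset_eq_union_of_lt_of_lt hab hac hcb
  · exact h.bset_eq_union_of_u_of_l hab hac hcb

theorem bset_eq_union_of_l_of_mem (h : IsSCExt lt u l) (hne : a ≠ b) (hab : l a b)
    (hc : c ∈ BSet lt u l a b) : BSet lt u l a b = BSet lt u l a c ∪ BSet lt u l c b := by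
  rcases (h.mem_bset_of_l hne hab).1 hc with rfl | rfl | ⟨hac, hcb⟩ | ⟨hbc, hca⟩
  · exact bset_eq_bset_self_union
  · exact bset_eq_union_bset_self
  · exact h.bset_eq_union_of_l_of_lt hne hab hac hcb
  · exact h.bset_eq_union_comm.2
      (h.bset_eq_union_of_l_of_lt hne.symm (h.l_symm a b hab) hbc hca)

theorem bset_eq_union_of_mem (h : IsSCExt lt u l) (hc : c ∈ BSet lt u l a b) :
    BSet lt u l a b = BSet lt u l a c ∪ BSet lt u l c b := by
  rcases eq_or_ne a b with rfl | hne
  · rw [bset_self, Set.mem_singleton_iff] at hc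
    rw [hc, Set.union_self]
  rcases h.lt_or_gt_or_u_or_l hne with hab | hba | hu | hl
  · exact h.bset_eq_union_of_lt_of_mem hab hc
  · exact h.bset_eq_union_comm.2 (h.bset_eq_union_of_lt_of_mem hba (h.bset_comm ▸ hc))
  · simpa only [h.bset_swap] using h.swap.bset_eq_union_of_l_of_mem hne hu (h.bset_swap ▸ hc)
  · exact h.bset_eq_union_of_l_of_mem hne hl hc

theorem mem_bset_iff_bset_eq_union (h : IsSCExt lt u l) :
    c ∈ BSet lt u l a b ↔ BSet lt u l a b = BSet lt u l a c ∪ BSet lt u l c b :=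
  ⟨h.bset_eq_union_of_mem, fun H => H ▸ Or.inl right_mem_bset⟩

end IsSCExt

end

/-- `c ∈ B_{a,b}` iff `B_{a,b} = B_{a,c} ∪ B_{c,b}`. -/
theorem stmt3 {S : Type*} [PartialOrder S] (u l : S → S → Prop)
    (hsce : IsSCExt ((· < ·) : S → S → Prop) u l) (a b c : S) :
    c ∈ BSet ((· < ·) : S → S → Prop) u l a b ↔
      BSet ((· < ·) : S → S → Prop) u l a b =
        BSet ((· < ·) : S → S → Prop) u l a c ∪ BSet ((· < ·) : S → S → Prop) u l c b :=
  hsce.mem_bset_iff_bset_eq_union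

end PaperSC
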